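/- Let 𝔖 be a translative cofinite G-semimatroid. (a) If x₀∈X∈𝒞 and rk(X)=rk(X∖{x₀})+1, then Y∪{g(x₀)}∈𝒞 for every g∈G and every Y∈𝒞 with Y̲=(X∖{x₀})̲. (b) If a₀∈A∈𝒞̲ and rk̲(A)=rk̲(A∖{a₀})+1, then the map w: 𝒞_A→𝒞_{A∖{a₀}} sending X to the set obtained from X by removing its (unique) element lying in the orbit a₀ is surjective, the induced map on G-orbits is surjective, and m_𝔖(A)≥m_𝔖(A∖{a₀}). (c) If a₀∈A∈𝒞̲ and rk̲(A)=rk̲(A∖{a₀}), then the map w is injective and m_𝔖(A)≤m_𝔖(A∖{a₀}). -/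

import Mathlib

open scoped Classical Pointwise


/-- A finitary semimatroid on the ground set `S`: a nonempty, finite-dimensional
simplicial complex `C` of finite subsets of `S` (containing all singletons), together
with a rank function satisfying (R1)-(R3), (CR1), (CR2). -/
structure FinSemimatroid (S : Type*) [DecidableEq S] where
  C : Set (Finset S)
  rk : Finset S → ℕ
  nonempty : C.Nonempty
  downClosed : ∀ ⦃X Y : Finset S⦄, X ∈ C → Y ⊆ X → Y ∈ C
  singleton_mem : ∀ x : S, ({x} : Finset S) ∈ C
  finDim : ∃ d : ℕ, ∀ X ∈ C, X.card ≤ d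
  r1 : ∀ X ∈ C, rk X ≤ X.card
  r2 : ∀ ⦃X Y : Finset S⦄, X ∈ C → Y ∈ C → X ⊆ Y → rk X ≤ rk Y
  r3 : ∀ ⦃X Y : Finset S⦄, X ∈ C → Y ∈ C → X ∪ Y ∈ C →
    rk (X ∪ Y) + rk (X ∩ Y) ≤ rk X + rk Y
  cr1 : ∀ ⦃X Y : Finset S⦄, X ∈ C → Y ∈ C → rk X = rk (X ∩ Y) → X ∪ Y ∈ C
  cr2 : ∀ ⦃X Y : Finset S⦄, X ∈ C → Y ∈ C → rk X < rk Y →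
    ∃ y ∈ Y, y ∉ X ∧ insert y X ∈ C

namespace FinSemimatroid

variable {S : Type*} [DecidableEq S]

/-- The closure of a central set. -/
def cl (M : FinSemimatroid S) (X : Finset S) : Set S :=
  {y : S | insert y X ∈ M.C ∧ M.rk (insert y X) = M.rk X}

/-- A flat is a closed central set. -/
def IsFlat (M : FinSemimatroid S) (X : Finset S) : Prop :=
  X ∈ M.C ∧ M.cl X = (X : Set S)

/-- The poset of flats, ordered by inclusion. -/
abbrev Flats (M : FinSemimatroid S) : Type _ := {X : Finset S // M.IsFlat X}

/-- A simple finitary semimatroid. -/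
def Simple (M : FinSemimatroid S) : Prop :=
  (∀ x : S, M.rk {x} = 1) ∧
    ∀ x y : S, x ≠ y → ({x, y} : Finset S) ∈ M.C → M.rk {x, y} = 2

end FinSemimatroid

/-- A poset is chain-finite if all its chains are finite. -/
def ChainFinite (L : Type*) [PartialOrder L] : Prop :=
  ∀ c : Set L, IsChain (· ≤ ·) c → c.Finite

/-- An atom of a bounded-below poset: an element covering the minimum. -/
def PosetAtom {L : Type*} [PartialOrder L] (a : L) : Prop :=
  ∃ bot : L, IsBot bot ∧ bot ⋖ a

/-- `L` (with rank function `rk`) is a finite geometric lattice (finite, bounded below,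
a lattice, ranked by `rk`, atomic and semimodular) with at most `N` atoms. -/
def IsFinGeomLatticeAtMost (L : Type*) [PartialOrder L] (rk : L → ℕ) (N : ℕ) : Prop :=
  Finite L ∧
    ∃ bot : L, IsBot bot ∧
      (∀ x y : L, ∃ m : L, IsGLB {x, y} m) ∧
      (∀ x y : L, ∃ j : L, IsLUB {x, y} j) ∧
      (∀ x y : L, x ⋖ y → rk y = rk x + 1) ∧
      (∀ x : L, ∃ A : Set L, (∀ a ∈ A, bot ⋖ a) ∧ IsLUB A x) ∧
      (∀ x y m j : L, IsGLB {x, y} m → IsLUB {x, y} j → rk j + rk m ≤ rk x + rk y) ∧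
      Nat.card {a : L | bot ⋖ a} ≤ N
/-- A `G`-semimatroid: an action of `G` on a finitary semimatroid, preserving
centrality and rank. -/
structure GSemimatroid (G S : Type*) [Group G] [MulAction G S] [DecidableEq S]
    extends FinSemimatroid S where
  smul_mem : ∀ (g : G) ⦃X : Finset S⦄, X ∈ C → X.image (g • ·) ∈ C
  rk_smul : ∀ (g : G) ⦃X : Finset S⦄, X ∈ C → rk (X.image (g • ·)) = rk X

namespace GSemimatroid

variable {G S : Type*} [Group G] [MulAction G S] [DecidableEq S]

/-- The set of orbits `E_𝔖 = S/G`. -/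
abbrev E (G S : Type*) [Group G] [MulAction G S] : Type _ :=
  Quotient (MulAction.orbitRel G S)

/-- The orbit of a point. -/
def orbOf (G : Type*) {S : Type*} [Group G] [MulAction G S] (x : S) : E G S :=
  Quotient.mk (MulAction.orbitRel G S) x

/-- `X̲`: the set of orbits met by `X`. -/
def under (G : Type*) {S : Type*} [Group G] [MulAction G S] (X : Finset S) :
    Set (E G S) :=
  orbOf G '' (X : Set S)

variable (M : GSemimatroid G S)

/-- `𝒞̲ = {X̲ : X ∈ 𝒞}`. -/
def CQ : Set (Set (E G S)) := {A | ∃ X ∈ M.C, under G X = A}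

/-- `rk̲ A = max { rk X : X ∈ 𝒞, X̲ ⊆ A }`. -/
noncomputable def rkQ (A : Set (E G S)) : ℕ :=
  sSup {n : ℕ | ∃ X ∈ M.C, under G X ⊆ A ∧ M.rk X = n}

/-- `𝒞_A`: the central sets lying over `A`. -/
def CA (A : Set (E G S)) : Set (Finset S) := {X | X ∈ M.C ∧ under G X = A}

/-- The type of central sets. -/
abbrev Cen : Type _ := {X : Finset S // X ∈ M.C}

/-- The `G`-orbit relation on central sets. -/
def cenRel (X Y : M.Cen) : Prop := ∃ g : G, X.1.image (g • ·) = Y.1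

/-- The set `𝒞/G` of orbits of central sets. -/
def COrb : Type _ := Quot M.cenRel

/-- The action is cofinite if `𝒞/G` is finite. -/
def Cofinite : Prop := Finite M.COrb

/-- `m_𝔖(A) = |𝒞_A / G|`. -/
noncomputable def m (A : Set (E G S)) : ℕ :=
  Nat.card {O : M.COrb // ∃ X : M.Cen, under G X.1 = A ∧ Quot.mk M.cenRel X = O}

def WeaklyTranslative : Prop :=
  ∀ (g : G) (x : S), ({x, g • x} : Finset S) ∈ M.C →
    M.rk {x, g • x} = M.rk ({x} : Finset S)

def Translative : Prop :=
  ∀ (g : G) (x : S), ({x, g • x} : Finset S) ∈ M.C → g • x = x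

def Centered : Prop := ∃ X ∈ M.C, under G X = (Set.univ : Set (E G S))

def Normal (_M : GSemimatroid G S) : Prop :=
  ∀ x : S, Subgroup.Normal (MulAction.stabilizer G x)

def AlmostArithmetic : Prop := M.Translative ∧ M.Normal

/-- The action is arithmetic: almost-arithmetic, and for every central `X` the set
`W(X) ⊆ Γ^X` is a subgroup (expressed via representative families of group elements). -/
def Arithmetic : Prop :=
  M.AlmostArithmetic ∧
    ∀ ⦃X : Finset S⦄, X ∈ M.C → ∀ γ δ : S → G,
      X.image (fun x => γ x • x) ∈ M.C → X.image (fun x => δ x • x) ∈ M.C →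
        X.image (fun x => (γ x * δ x) • x) ∈ M.C ∧
          X.image (fun x => (γ x)⁻¹ • x) ∈ M.C

/-- Remove from `X` all elements of the orbit `a₀`. -/
noncomputable def strip (a₀ : E G S) (X : Finset S) : Finset S :=
  X.filter (fun x => orbOf G x ≠ a₀)

/-- The Tutte polynomial of a `G`-semimatroid, as a function `ℤ × ℤ → ℤ`. -/
noncomputable def Tutte (x y : ℤ) : ℤ :=
  ∑ᶠ A ∈ M.CQ, (M.m A : ℤ) * (x - 1) ^ (M.rkQ Set.univ - M.rkQ A) *
    (y - 1) ^ (Nat.card A - M.rkQ A)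

end GSemimatroid

open GSemimatroid

/-!
A translative action lets a central set meet each orbit at most once. Hence CR2 cannot enlarge
a central set `Z` by an element of an orbit `Z` already meets, so rank is monotone along
`X ↦ X̲` and `rk̲ X̲ = rk X`. In (a), CR2 applied to `Y` and `g X` yields an element of `g X`
outside the orbits met by `Y`, which can only be `g x₀`. Part (b) follows by adding to `Y` the
element over `a₀` of a central `Z` with `Z̲ = A`. In (c), `strip a₀ X₁ = strip a₀ X₂` already
has the rank of `X₁`, so `X₁ ∪ X₂` is central by CR1 and its unique element over `a₀` is shared
by `X₁` and `X₂`. Since `strip` commutes with the action, both properties pass to orbits of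
central sets, which are finitely many by cofiniteness.
-/

namespace GSemimatroid

variable {G S : Type*} [Group G] [MulAction G S]

lemma orbOf_smul (g : G) (x : S) : orbOf G (g • x) = orbOf G x :=
  Quotient.sound ⟨g, rfl⟩

lemma mem_under {X : Finset S} {a : E G S} : a ∈ under G X ↔ ∃ x ∈ X, orbOf G x = a :=
  Iff.rfl

lemma strip_eq_self {a₀ : E G S} {X : Finset S} (h : a₀ ∉ under G X) : strip a₀ X = X :=
  Finset.filter_true_of_mem fun x hx hxa => h ⟨x, hx, hxa⟩

lemma under_strip (a₀ : E G S) (X : Finset S) : under G (strip a₀ X) = under G X \ {a₀} := by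
  ext a
  simp only [mem_under, strip, Finset.mem_filter, Set.mem_sdiff, Set.mem_singleton_iff]
  constructor
  · rintro ⟨x, ⟨hx, hne⟩, rfl⟩
    exact ⟨⟨x, hx, rfl⟩, hne⟩
  · rintro ⟨⟨x, hx, rfl⟩, hne⟩
    exact ⟨x, ⟨hx, hne⟩, rfl⟩

variable [DecidableEq S]

lemma under_image_smul (g : G) (X : Finset S) : under G (X.image (g • ·)) = under G X := by
  simp only [under, Finset.coe_image, Set.image_image, orbOf_smul]

lemma under_insert (x : S) (X : Finset S) :
    under G (insert x X) = insert (orbOf G x) (under G X) := by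
  simp only [under, Finset.coe_insert, Set.image_insert_eq]

lemma strip_image_smul (a₀ : E G S) (g : G) (X : Finset S) :
    strip a₀ (X.image (g • ·)) = (strip a₀ X).image (g • ·) := by
  simp [strip, Finset.filter_image, orbOf_smul]

lemma strip_insert_of_orbOf_eq {a₀ : E G S} {x : S} (hx : orbOf G x = a₀) (X : Finset S) :
    strip a₀ (insert x X) = strip a₀ X := by
  simp [strip, Finset.filter_insert, hx]

namespace Translative

variable {M : GSemimatroid G S}

lemma eq_of_orbOf_eq (htr : M.Translative) {X : Finset S} (hX : X ∈ M.C) {x y : S}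
    (hx : x ∈ X) (hy : y ∈ X) (h : orbOf G x = orbOf G y) : x = y := by
  obtain ⟨g, rfl⟩ : ∃ g : G, g • y = x := Quotient.exact h
  exact htr g y (M.downClosed hX (by simp [Finset.insert_subset_iff, hx, hy]))

lemma orbOf_notMem_under (htr : M.Translative) {Y : Finset S} {y : S}
    (h : insert y Y ∈ M.C) (hy : y ∉ Y) : orbOf G y ∉ under G Y := by
  rintro ⟨z, hz, hzy⟩
  obtain rfl := htr.eq_of_orbOf_eq h (Finset.mem_insert_of_mem hz) (Finset.mem_insert_self y Y) hzy
  exact hy hz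

lemma rk_le_of_under_subset (htr : M.Translative) {W Z : Finset S} (hW : W ∈ M.C)
    (hZ : Z ∈ M.C) (h : under G W ⊆ under G Z) : M.rk W ≤ M.rk Z := by
  by_contra! hlt
  obtain ⟨y, hyW, hyZ, hins⟩ := M.cr2 hZ hW hlt
  exact htr.orbOf_notMem_under hins hyZ (h ⟨y, hyW, rfl⟩)

lemma rkQ_under (htr : M.Translative) {Z : Finset S} (hZ : Z ∈ M.C) :
    M.rkQ (under G Z) = M.rk Z := by
  refine IsGreatest.csSup_eq ⟨⟨Z, hZ, subset_rfl, rfl⟩, ?_⟩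
  rintro _ ⟨X, hX, hXZ, rfl⟩
  exact htr.rk_le_of_under_subset hX hZ hXZ

lemma strip_orbOf_eq_erase (htr : M.Translative) {X : Finset S} (hX : X ∈ M.C) {x : S}
    (hx : x ∈ X) : strip (orbOf G x) X = X.erase x := by
  ext y
  simp only [strip, Finset.mem_filter, Finset.mem_erase]
  constructor
  · rintro ⟨hy, hne⟩
    exact ⟨fun h => hne (h ▸ rfl), hy⟩
  · rintro ⟨hne, hy⟩
    exact ⟨hy, fun h => hne (htr.eq_of_orbOf_eq hX hy hx h)⟩

lemma insert_strip_orbOf (htr : M.Translative) {X : Finset S} (hX : X ∈ M.C) {x : S}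
    (hx : x ∈ X) : insert x (strip (orbOf G x) X) = X := by
  rw [htr.strip_orbOf_eq_erase hX hx, Finset.insert_erase hx]

lemma insert_mem_of_rk_erase_lt (htr : M.Translative) {X Y : Finset S} {x₀ : S}
    (hx₀ : x₀ ∈ X) (hX : X ∈ M.C) (hrk : M.rk (X.erase x₀) < M.rk X) (hY : Y ∈ M.C)
    (hYX : under G Y = under G (X.erase x₀)) : insert x₀ Y ∈ M.C := by
  have hXe : X.erase x₀ ∈ M.C := M.downClosed hX (Finset.erase_subset _ _)
  have hlt : M.rk Y < M.rk X :=
    (htr.rk_le_of_under_subset hY hXe hYX.le).trans_lt hrk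
  obtain ⟨y, hyX, hyY, hins⟩ := M.cr2 hY hX hlt
  obtain rfl : y = x₀ := by
    by_contra hne
    refine htr.orbOf_notMem_under hins hyY ?_
    rw [hYX]
    exact ⟨y, Finset.mem_erase.2 ⟨hne, hyX⟩, rfl⟩
  exact hins

lemma insert_smul_mem (htr : M.Translative) {X Y : Finset S} {x₀ : S} (hx₀ : x₀ ∈ X)
    (hX : X ∈ M.C) (hrk : M.rk (X.erase x₀) < M.rk X) (g : G) (hY : Y ∈ M.C)
    (hYX : under G Y = under G (X.erase x₀)) : insert (g • x₀) Y ∈ M.C := by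
  have hXe : X.erase x₀ ∈ M.C := M.downClosed hX (Finset.erase_subset _ _)
  have herase : (X.image (g • ·)).erase (g • x₀) = (X.erase x₀).image (g • ·) :=
    (Finset.image_erase (MulAction.injective g) X x₀).symm
  refine htr.insert_mem_of_rk_erase_lt (Finset.mem_image_of_mem _ hx₀) (M.smul_mem g hX) ?_ hY ?_
  · rwa [herase, M.rk_smul g hX, M.rk_smul g hXe]
  · rw [herase, under_image_smul, hYX]

lemma surjOn_strip (htr : M.Translative) {A : Set (E G S)} {a₀ : E G S} (ha₀ : a₀ ∈ A)
    (hA : A ∈ M.CQ) (hrk : M.rkQ A = M.rkQ (A \ {a₀}) + 1) :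
    Set.SurjOn (strip a₀) (M.CA A) (M.CA (A \ {a₀})) := by
  obtain ⟨Z, hZ, rfl⟩ := hA
  obtain ⟨z₀, hz₀, rfl⟩ := mem_under.mp ha₀
  have hZe : Z.erase z₀ ∈ M.C := M.downClosed hZ (Finset.erase_subset _ _)
  have hunder : under G (Z.erase z₀) = under G Z \ {orbOf G z₀} := by
    rw [← htr.strip_orbOf_eq_erase hZ hz₀, under_strip]
  have hrkZ : M.rk (Z.erase z₀) < M.rk Z := by
    rw [← htr.rkQ_under hZ, ← htr.rkQ_under hZe, hunder, hrk]
    exact Nat.lt_succ_self _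
  rintro Y ⟨hY, hYA⟩
  have hz₀Y : orbOf G z₀ ∉ under G Y := by simp [hYA]
  have hins := htr.insert_mem_of_rk_erase_lt hz₀ hZ hrkZ hY (hYA.trans hunder.symm)
  refine ⟨insert z₀ Y, ⟨hins, ?_⟩, ?_⟩
  · rw [under_insert, hYA, Set.insert_sdiff_singleton, Set.insert_eq_of_mem ha₀]
  · rw [strip_insert_of_orbOf_eq rfl, strip_eq_self hz₀Y]

lemma injOn_strip (htr : M.Translative) {A : Set (E G S)} {a₀ : E G S} (ha₀ : a₀ ∈ A)
    (hrk : M.rkQ A = M.rkQ (A \ {a₀})) : Set.InjOn (strip a₀) (M.CA A) := by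
  rintro X₁ ⟨hX₁, hA₁⟩ X₂ ⟨hX₂, hA₂⟩ hstrip
  have hY : strip a₀ X₁ ∈ M.C := M.downClosed hX₁ (Finset.filter_subset _ _)
  have hrkY : M.rk X₁ ≤ M.rk (strip a₀ X₁) := by
    rw [← htr.rkQ_under hX₁, ← htr.rkQ_under hY, under_strip, hA₁, hrk]
  have hYsub : strip a₀ X₁ ⊆ X₁ ∩ X₂ :=
    Finset.subset_inter (Finset.filter_subset _ _) (hstrip ▸ Finset.filter_subset _ _)
  have hcap : X₁ ∩ X₂ ∈ M.C := M.downClosed hX₁ Finset.inter_subset_left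
  have hunion : X₁ ∪ X₂ ∈ M.C := M.cr1 hX₁ hX₂ <|
    le_antisymm (hrkY.trans (M.r2 hY hcap hYsub)) (M.r2 hcap hX₁ Finset.inter_subset_left)
  obtain ⟨x₁, hx₁, rfl⟩ := mem_under.mp (hA₁ ▸ ha₀)
  obtain ⟨x₂, hx₂, hx₂₁⟩ := mem_under.mp (hA₂ ▸ ha₀)
  obtain rfl := htr.eq_of_orbOf_eq hunion (Finset.mem_union_right _ hx₂)
    (Finset.mem_union_left _ hx₁) hx₂₁
  rw [← htr.insert_strip_orbOf hX₁ hx₁, ← htr.insert_strip_orbOf hX₂ hx₂, hstrip]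

end Translative

variable (M : GSemimatroid G S)

lemma cenRel_equivalence : Equivalence M.cenRel where
  refl X := ⟨1, by simp⟩
  symm := by
    rintro X Y ⟨g, hg⟩
    refine ⟨g⁻¹, ?_⟩
    simp [← hg, Finset.image_image, Function.comp_def]
  trans := by
    rintro X Y Z ⟨g, hg⟩ ⟨h, hh⟩
    refine ⟨h * g, ?_⟩
    simp [← hh, ← hg, Finset.image_image, Function.comp_def, mul_smul]

lemma cenRel_of_mk_eq {X Y : M.Cen} (h : Quot.mk M.cenRel X = Quot.mk M.cenRel Y) :
    M.cenRel X Y :=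
  M.cenRel_equivalence.eqvGen_iff.mp (Quot.eqvGen_exact h)

/-- The set `𝒞_A / G`, so that `m_𝔖(A)` is its cardinality. -/
def orbitsOver (A : Set (E G S)) : Set M.COrb :=
  {O | ∃ X : M.Cen, under G X.1 = A ∧ Quot.mk M.cenRel X = O}

lemma m_eq_ncard_orbitsOver (A : Set (E G S)) : M.m A = (M.orbitsOver A).ncard :=
  Nat.card_coe_set_eq (M.orbitsOver A)

noncomputable def stripCen (a₀ : E G S) (X : M.Cen) : M.Cen :=
  ⟨strip a₀ X.1, M.downClosed X.2 (Finset.filter_subset _ _)⟩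

noncomputable def stripOrb (a₀ : E G S) : M.COrb → M.COrb :=
  Quot.map (M.stripCen a₀) fun X _ ⟨g, hg⟩ =>
    ⟨g, (strip_image_smul a₀ g X.1).symm.trans (congrArg (strip a₀) hg)⟩

variable {M} {A : Set (E G S)} {a₀ : E G S}

lemma mapsTo_stripOrb : Set.MapsTo (M.stripOrb a₀) (M.orbitsOver A) (M.orbitsOver (A \ {a₀})) := by
  rintro _ ⟨X, hX, rfl⟩
  exact ⟨M.stripCen a₀ X, by rw [stripCen, under_strip, hX], rfl⟩

lemma surjOn_stripOrb (hsurj : Set.SurjOn (strip a₀) (M.CA A) (M.CA (A \ {a₀}))) :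
    Set.SurjOn (M.stripOrb a₀) (M.orbitsOver A) (M.orbitsOver (A \ {a₀})) := by
  rintro _ ⟨Y, hY, rfl⟩
  obtain ⟨X, ⟨hX, hXA⟩, hXY⟩ := hsurj ⟨Y.2, hY⟩
  exact ⟨Quot.mk _ ⟨X, hX⟩, ⟨⟨X, hX⟩, hXA, rfl⟩, congrArg (Quot.mk _) (Subtype.ext hXY)⟩

lemma injOn_stripOrb (hinj : Set.InjOn (strip a₀) (M.CA A)) :
    Set.InjOn (M.stripOrb a₀) (M.orbitsOver A) := by
  rintro _ ⟨X₁, hX₁, rfl⟩ _ ⟨X₂, hX₂, rfl⟩ h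
  obtain ⟨g, hg⟩ := M.cenRel_of_mk_eq h
  have hgX₁ : X₁.1.image (g • ·) ∈ M.CA A := ⟨M.smul_mem g X₁.2, by rw [under_image_smul, hX₁]⟩
  refine Quot.sound ⟨g, hinj hgX₁ ⟨X₂.2, hX₂⟩ ?_⟩
  rw [strip_image_smul]
  exact hg

lemma m_sdiff_le_of_surjOn (hcof : M.Cofinite)
    (hsurj : Set.SurjOn (strip a₀) (M.CA A) (M.CA (A \ {a₀}))) :
    M.m (A \ {a₀}) ≤ M.m A := by
  have : Finite M.COrb := hcof
  rw [m_eq_ncard_orbitsOver, m_eq_ncard_orbitsOver]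
  exact (Set.ncard_le_ncard (surjOn_stripOrb hsurj)).trans Set.ncard_image_le

lemma m_le_m_sdiff_of_injOn (hcof : M.Cofinite) (hinj : Set.InjOn (strip a₀) (M.CA A)) :
    M.m A ≤ M.m (A \ {a₀}) := by
  have : Finite M.COrb := hcof
  rw [m_eq_ncard_orbitsOver, m_eq_ncard_orbitsOver]
  exact Set.ncard_le_ncard_of_injOn _ mapsTo_stripOrb (injOn_stripOrb hinj)

end GSemimatroid

/-- For a translative cofinite `G`-semimatroid:
(a) if `rk X = rk (X \ {x₀}) + 1` then `Y ∪ {g x₀}` is central for every `g` and every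
central `Y` with `Y̲ = (X \ {x₀})̲`;
(b) if `rk̲ A = rk̲ (A \ {a₀}) + 1` then the map removing the element of orbit `a₀` is
surjective `𝒞_A → 𝒞_{A∖a₀}`, induces a surjection on `G`-orbits, and
`m_𝔖(A) ≥ m_𝔖(A∖a₀)`;
(c) if `rk̲ A = rk̲ (A \ {a₀})` then that map is injective and `m_𝔖(A) ≤ m_𝔖(A∖a₀)`. -/
theorem translative_strip_maps
    {G S : Type*} [Group G] [MulAction G S] [DecidableEq S]
    (M : GSemimatroid G S) (hcof : M.Cofinite) (htr : M.Translative) :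
    (∀ (X : Finset S) (x₀ : S), x₀ ∈ X → X ∈ M.C →
      M.rk X = M.rk (X.erase x₀) + 1 →
      ∀ (g : G) (Y : Finset S), Y ∈ M.C → under G Y = under G (X.erase x₀) →
        insert (g • x₀) Y ∈ M.C) ∧
    (∀ (A : Set (E G S)) (a₀ : E G S), a₀ ∈ A → A ∈ M.CQ →
      M.rkQ A = M.rkQ (A \ {a₀}) + 1 →
      (∀ Y ∈ M.CA (A \ {a₀}), ∃ X ∈ M.CA A, strip a₀ X = Y) ∧
      (∀ Y ∈ M.CA (A \ {a₀}), ∃ X ∈ M.CA A, ∃ g : G,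
        (strip a₀ X).image (g • ·) = Y) ∧
      M.m (A \ {a₀}) ≤ M.m A) ∧
    (∀ (A : Set (E G S)) (a₀ : E G S), a₀ ∈ A → A ∈ M.CQ →
      M.rkQ A = M.rkQ (A \ {a₀}) →
      (∀ X₁ ∈ M.CA A, ∀ X₂ ∈ M.CA A, strip a₀ X₁ = strip a₀ X₂ → X₁ = X₂) ∧
      M.m A ≤ M.m (A \ {a₀})) := by
  refine ⟨fun X x₀ hx₀ hX hrk g Y hY hYX => ?_, fun A a₀ ha₀ hA hrk => ?_,
    fun A a₀ ha₀ _ hrk => ?_⟩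
  · exact htr.insert_smul_mem hx₀ hX (by omega) g hY hYX
  · have hsurj := htr.surjOn_strip ha₀ hA hrk
    refine ⟨hsurj, fun Y hY => ?_, m_sdiff_le_of_surjOn hcof hsurj⟩
    obtain ⟨X, hX, hXY⟩ := hsurj hY
    exact ⟨X, hX, 1, by simpa using hXY⟩
  · have hinj := htr.injOn_strip ha₀ hrk
    exact ⟨fun _ h₁ _ h₂ => hinj h₁ h₂, m_le_m_sdiff_of_injOn hcof hinj⟩
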